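/- Let k ≥ 2, let f : (k+1)^V → ℝ be orthant submodular and pairwise monotone, let ε ≥ 0, and let f̂ : (k+1)^V → ℝ satisfy |f(x) − f̂(x)| ≤ ε for all x. Let s, z ∈ (k+1)^V with s ⪯ z, let e, o ∈ V with z(e) = 0 and z(o) = 0, and let i, i', h ∈ {1,…,k} with h ≠ i. If Δ_{e,i} f̂(s) ≥ Δ_{o,i'} f̂(s) and Δ_{e,i} f̂(s) ≥ Δ_{e,h} f̂(s), then 2·Δ_{e,i} f̂(s) ≥ Δ_{o,i'} f(z) − Δ_{e,i} f(z) − 4ε. -/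

import Mathlib

/-!
Each marginal gain of `f̂` is within `2ε` of the same gain of `f`. Orthant submodularity lowers
`Δ_{o,i'}f` and `Δ_{e,h}f` from `s` to `z`, and pairwise monotonicity at `z` gives
`-Δ_{e,i}f(z) ≤ Δ_{e,h}f(z)`; so each of the two greedy inequalities bounds `Δ_{e,i}f̂(s)` by one
half of the right-hand side.
-/

namespace Stmt16

variable {V : Type*}

/-- Marginal gain `Δ_{e,i} f(x) = f(x[e↦i]) − f(x)`. -/
def marg {k : ℕ} [DecidableEq V] (f : (V → Fin (k+1)) → ℝ)
    (x : V → Fin (k+1)) (e : V) (i : Fin (k+1)) : ℝ :=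
  f (Function.update x e i) - f x

/-- `x ⪯ y` : `y` agrees with `x` on the support of `x`. -/
def preceq {k : ℕ} (x y : V → Fin (k+1)) : Prop :=
  ∀ e, x e ≠ 0 → y e = x e

def OrthantSubmodular {k : ℕ} [DecidableEq V] (f : (V → Fin (k+1)) → ℝ) : Prop :=
  ∀ x y : V → Fin (k+1), preceq x y → ∀ e, y e = 0 → ∀ i : Fin (k+1), i ≠ 0 →
    marg f x e i ≥ marg f y e i

def PairwiseMonotone {k : ℕ} [DecidableEq V] (f : (V → Fin (k+1)) → ℝ) : Prop :=
  ∀ x : V → Fin (k+1), ∀ e, x e = 0 → ∀ i j : Fin (k+1), i ≠ 0 → j ≠ 0 → i ≠ j →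
    marg f x e i + marg f x e j ≥ 0

theorem marg_le_marg_add_two_mul {k : ℕ} [DecidableEq V] {f g : (V → Fin (k+1)) → ℝ} {ε : ℝ}
    (hclose : ∀ x, |f x - g x| ≤ ε) (x : V → Fin (k+1)) (a : V) (j : Fin (k+1)) :
    marg f x a j ≤ marg g x a j + 2 * ε := by
  have hupd := abs_le.mp (hclose (Function.update x a j))
  have hx := abs_le.mp (hclose x)
  unfold marg
  linarith [hupd.2, hx.1]

theorem PairwiseMonotone.neg_marg_le {k : ℕ} [DecidableEq V] {f : (V → Fin (k+1)) → ℝ}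
    (hpm : PairwiseMonotone f) {x : V → Fin (k+1)} {a : V} (hx : x a = 0)
    {i j : Fin (k+1)} (hi : i ≠ 0) (hj : j ≠ 0) (hij : i ≠ j) :
    -marg f x a i ≤ marg f x a j := by
  linarith [hpm x a hx i j hi hj hij]

theorem stmt16_general {k : ℕ} [DecidableEq V]
    (f fh : (V → Fin (k+1)) → ℝ)
    (hos : OrthantSubmodular f) (hpm : PairwiseMonotone f)
    (ε : ℝ)
    (hclose : ∀ x, |f x - fh x| ≤ ε)
    (s z : V → Fin (k+1)) (hsz : preceq s z)
    (e o : V) (hze : z e = 0) (hzo : z o = 0)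
    (i i' h : Fin (k+1)) (hi : i ≠ 0) (hi' : i' ≠ 0) (hh : h ≠ 0) (hhi : h ≠ i)
    (hgr1 : marg fh s e i ≥ marg fh s o i')
    (hgr2 : marg fh s e i ≥ marg fh s e h) :
    2 * marg fh s e i ≥ marg f z o i' - marg f z e i - 4 * ε := by
  have approx := marg_le_marg_add_two_mul hclose
  have bound_o : marg f z o i' - 2 * ε ≤ marg fh s e i :=
    calc marg f z o i' - 2 * ε ≤ marg f s o i' - 2 * ε := by
          linarith [hos s z hsz o hzo i' hi']
      _ ≤ marg fh s o i' := by linarith [approx s o i']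
      _ ≤ marg fh s e i := hgr1
  have bound_e : -marg f z e i - 2 * ε ≤ marg fh s e i :=
    calc -marg f z e i - 2 * ε ≤ marg f z e h - 2 * ε := by
          linarith [hpm.neg_marg_le hze hi hh hhi.symm]
      _ ≤ marg f s e h - 2 * ε := by linarith [hos s z hsz e hze h hh]
      _ ≤ marg fh s e h := by linarith [approx s e h]
      _ ≤ marg fh s e i := hgr2
  linarith

/-- Per-iteration inequality in the robustness analysis of the greedy algorithm
for non-monotone `k`-submodular maximization under a matroid constraint:
if `Δ_{e,i} f̂(s) ≥ Δ_{o,i'} f̂(s)` and `Δ_{e,i} f̂(s) ≥ Δ_{e,h} f̂(s)` then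
`2·Δ_{e,i} f̂(s) ≥ Δ_{o,i'} f(z) − Δ_{e,i} f(z) − 4ε`. -/
theorem stmt16 {k : ℕ} (hk : 2 ≤ k) [Fintype V] [DecidableEq V]
    (f fh : (V → Fin (k+1)) → ℝ)
    (hos : OrthantSubmodular f) (hpm : PairwiseMonotone f)
    (ε : ℝ) (hε : 0 ≤ ε)
    (hclose : ∀ x, |f x - fh x| ≤ ε)
    (s z : V → Fin (k+1)) (hsz : preceq s z)
    (e o : V) (hze : z e = 0) (hzo : z o = 0)
    (i i' h : Fin (k+1)) (hi : i ≠ 0) (hi' : i' ≠ 0) (hh : h ≠ 0) (hhi : h ≠ i)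
    (hgr1 : marg fh s e i ≥ marg fh s o i')
    (hgr2 : marg fh s e i ≥ marg fh s e h) :
    2 * marg fh s e i ≥ marg f z o i' - marg f z e i - 4 * ε :=
  stmt16_general f fh hos hpm ε hclose s z hsz e o hze hzo i i' h hi hi' hh hhi hgr1 hgr2

end Stmt16
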